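/- Let N(x,t) = Σ_{i≥1} h_i(x) t^i/i! be the exponential generating function of the polynomials h_i(x) defined by the nest-counting formula (h_n(x) = Σ over nests S on [n] with c(S)=1 and μ ∈ M_S of x^{||μ||}). Then N satisfies the functional equation (1 − x)·x^d·t + (1 − x^{d+1}) = exp(x^d N) − x^{d+1}·exp(N), as formal power series in t with coefficients in ℚ(x). -/

import Mathlib

open Finset

/-- A nest on `[n]`: a collection of nonempty subsets of `[n]` containing all
singletons, such that any two elements are disjoint or nested. -/
def IsNest (n : ℕ) (S : Finset (Finset (Fin n))) : Prop :=
  (∀ i : Fin n, {i} ∈ S) ∧ (∀ I ∈ S, I.Nonempty) ∧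
    (∀ I ∈ S, ∀ J ∈ S, I ∩ J = ∅ ∨ I ⊆ J ∨ J ⊆ I)

/-- The inclusion-maximal elements of `S`. -/
def maxElems (n : ℕ) (S : Finset (Finset (Fin n))) : Finset (Finset (Fin n)) :=
  S.filter (fun I => ∀ J ∈ S, I ⊆ J → I = J)

/-- `c(S)`, the number of maximal elements of `S`. -/
def numMax (n : ℕ) (S : Finset (Finset (Fin n))) : ℕ := (maxElems n S).card

/-- The sons of `I` in `S`: maximal elements of `{J ∈ S : J ⊊ I}`. -/
def sons (n : ℕ) (S : Finset (Finset (Fin n))) (I : Finset (Fin n)) :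
    Finset (Finset (Fin n)) :=
  S.filter (fun J => J ⊂ I ∧ ∀ K ∈ S, K ⊂ I → J ⊆ K → J = K)

/-- `S°`: the non-singleton elements of `S`. -/
def nestInterior (n : ℕ) (S : Finset (Finset (Fin n))) : Finset (Finset (Fin n)) :=
  S.filter (fun I => 2 ≤ I.card)

/-- `σ_k(x) = Σ_{i=1}^{dk-1} x^i` (so `σ_0 = 0`). -/
noncomputable def sigmaPoly (d k : ℕ) : Polynomial ℤ :=
  ∑ i ∈ Finset.Icc 1 (d * k - 1), Polynomial.X ^ i

open Classical in
/-- `h_n(x) = Σ_{S, μ} x^{‖μ‖}` over nests `S` on `[n]` with `c(S) = 1` and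
`μ ∈ M_S`, i.e. `μ : S° → ℤ` with `1 ≤ μ_I ≤ d(c_I - 1) - 1`. -/
noncomputable def hpoly (d n : ℕ) : Polynomial ℤ :=
  ∑ S ∈ Finset.univ.filter (fun S => IsNest n S ∧ numMax n S = 1),
    ∑ μ ∈ (nestInterior n S).pi (fun I => Finset.Icc 1 (d * ((sons n S I).card - 1) - 1)),
      Polynomial.X ^ (∑ I ∈ (nestInterior n S).attach, μ I.1 I.2)

/-- The formal exponential `exp(f)` of a power series `f` with zero constant
term: its `n`-th coefficient is `Σ_{k=0}^{n} (1/k!)·[t^n](f^k)` (terms with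
`k > n` vanish since `f` has zero constant term). -/
noncomputable def pexp {K : Type*} [CommRing K] [Algebra ℚ K] (f : PowerSeries K) :
    PowerSeries K :=
  PowerSeries.mk fun n =>
    ∑ k ∈ Finset.range (n + 1), (k.factorial : ℚ)⁻¹ • PowerSeries.coeff (R := K) n (f ^ k)

/-- The EGF `N(x,t) = Σ_{i≥1} h_i(x) t^i/i!` of the nest polynomials, as a power
series in `t` over `ℚ(x)`. -/
noncomputable def Npow (d : ℕ) : PowerSeries (RatFunc ℚ) :=
  PowerSeries.mk fun i =>
    if i = 0 then 0 else
      algebraMap (Polynomial ℚ) (RatFunc ℚ) ((hpoly d i).map (Int.castRingHom ℚ))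
        / (i.factorial : RatFunc ℚ)

/-!
Deleting the root `[n]` of a nest with one maximal element leaves a set partition of `[n]` into
its `k ≥ 2` sons, together with a nest with one maximal element on each block, and the root
contributes the factor `σ_d(k - 1)`. Hence
`h_n = ∑_π σ_d(|π| - 1) ∏_{B ∈ π} h_{|B|}` over the set partitions `π` of `[n]` with at least
two blocks. By the exponential formula, `n! [tⁿ] Nᵏ / k!` is the sum of `∏_{B ∈ π} h_{|B|}` over
the partitions `π` of `[n]` into `k` blocks, so `n!` times the `n`-th coefficient of the
right-hand side is `∑_π (x^{d|π|} - x^{d+1}) ∏_{B ∈ π} h_{|B|}`. As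
`x^{dk} - x^{d+1} = x^d (x - 1) σ_d(k - 1)`, the partitions with at least two blocks add up to
`x^d (x - 1) h_n`, which cancels the one-block term `(x^d - x^{d+1}) h_n` for `n ≥ 2`.
-/

open scoped Nat

section Partitions

variable {α : Type*} [DecidableEq α]

structure IsPartition (s : Finset α) (A : Finset (Finset α)) : Prop where
  nonempty : ∀ J ∈ A, J.Nonempty
  pairwiseDisjoint : (A : Set (Finset α)).PairwiseDisjoint id
  biUnion_eq : A.biUnion id = s

open Classical in
noncomputable def partitions (s : Finset α) : Finset (Finset (Finset α)) :=
  s.powerset.powerset.filter (IsPartition s)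

theorem isPartition_empty_iff {s : Finset α} : IsPartition s ∅ ↔ s = ∅ :=
  ⟨fun h => h.biUnion_eq.symm.trans biUnion_empty,
    fun h => ⟨by simp, by simp, by simp [h]⟩⟩

theorem isPartition_singleton {s : Finset α} (hs : s.Nonempty) : IsPartition s {s} :=
  ⟨by simpa using hs, by simp, by simp⟩

namespace IsPartition

variable {s B : Finset α} {A : Finset (Finset α)}

theorem subset (hA : IsPartition s A) {J : Finset α} (hJ : J ∈ A) : J ⊆ s :=
  hA.biUnion_eq ▸ subset_biUnion_of_mem id hJ

theorem disjoint (hA : IsPartition s A) {J K : Finset α} (hJ : J ∈ A) (hK : K ∈ A)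
    (hJK : J ≠ K) : Disjoint J K :=
  hA.pairwiseDisjoint hJ hK hJK

theorem card_le (hA : IsPartition s A) : A.card ≤ s.card :=
  calc A.card = ∑ _J ∈ A, 1 := card_eq_sum_ones A
    _ ≤ ∑ J ∈ A, J.card := sum_le_sum fun J hJ => (hA.nonempty J hJ).card_pos
    _ = s.card := by rw [← hA.biUnion_eq, card_biUnion hA.pairwiseDisjoint]; rfl

theorem notMem_of_sdiff (hA : IsPartition (s \ B) A) (hB : B.Nonempty) : B ∉ A := by
  intro hBA
  obtain ⟨b, hb⟩ := hB
  exact (mem_sdiff.1 (hA.subset hBA hb)).2 hb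

theorem erase (hA : IsPartition s A) (hB : B ∈ A) : IsPartition (s \ B) (A.erase B) where
  nonempty J hJ := hA.nonempty J (mem_of_mem_erase hJ)
  pairwiseDisjoint := hA.pairwiseDisjoint.subset (by simp)
  biUnion_eq := by
    rw [← hA.biUnion_eq, ← insert_erase hB, biUnion_insert, erase_insert (notMem_erase B A),
      id, union_sdiff_left, sdiff_eq_self_of_disjoint]
    exact (disjoint_biUnion_left _ _ _).2 fun J hJ =>
      hA.disjoint (mem_of_mem_erase hJ) hB (ne_of_mem_erase hJ)

theorem insert (hA : IsPartition (s \ B) A) (hBs : B ⊆ s) (hB : B.Nonempty) :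
    IsPartition s (insert B A) where
  nonempty J hJ := (mem_insert.1 hJ).elim (· ▸ hB) (hA.nonempty J)
  pairwiseDisjoint := by
    rw [coe_insert, Set.pairwiseDisjoint_insert]
    exact ⟨hA.pairwiseDisjoint, fun J hJ _ =>
      disjoint_sdiff.mono_right (hA.subset hJ)⟩
  biUnion_eq := by rw [biUnion_insert, hA.biUnion_eq, id, union_sdiff_of_subset hBs]

theorem eq_of_subset (hA : IsPartition s A) {J K I : Finset α} (hJ : J ∈ A) (hK : K ∈ A)
    (hI : I.Nonempty) (hIJ : I ⊆ J) (hIK : I ⊆ K) : J = K := by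
  by_contra h
  obtain ⟨i, hi⟩ := hI
  exact disjoint_left.1 (hA.disjoint hJ hK h) (hIJ hi) (hIK hi)

theorem ssubset_of_two_le_card (hA : IsPartition s A) (h2 : 2 ≤ A.card) {J : Finset α}
    (hJ : J ∈ A) : J ⊂ s := by
  refine (hA.subset hJ).ssubset_of_ne ?_
  rintro rfl
  obtain ⟨K, hK, hKJ⟩ := exists_mem_ne (by omega : 1 < A.card) J
  exact hKJ (hA.eq_of_subset hK hJ (hA.nonempty K hK) subset_rfl (hA.subset hK))

theorem eq_singleton (hA : IsPartition s A)
    (hcard : A.card = 1) : A = {s} := by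
  obtain ⟨J, rfl⟩ := card_eq_one.1 hcard
  simpa using hA.biUnion_eq

theorem two_le_card (hA : IsPartition s A)
    (hs : s.Nonempty) (hsA : s ∉ A) : 2 ≤ A.card := by
  by_contra! h
  interval_cases hc : A.card
  · rw [card_eq_zero] at hc
    subst hc
    exact hs.ne_empty (isPartition_empty_iff.1 hA)
  · exact hsA (by simp [hA.eq_singleton hc])

end IsPartition

theorem mem_partitions {s : Finset α} {A : Finset (Finset α)} :
    A ∈ partitions s ↔ IsPartition s A := by
  classical
  rw [partitions, mem_filter, mem_powerset, and_iff_right_iff_imp]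
  exact fun hA J hJ => mem_powerset.2 (hA.subset hJ)

theorem partitions_empty : partitions (∅ : Finset α) = {∅} := by
  ext A
  rw [mem_partitions, mem_singleton]
  refine ⟨fun hA => eq_empty_of_forall_notMem fun J hJ => ?_,
    fun h => h ▸ isPartition_empty_iff.2 rfl⟩
  exact (hA.nonempty J hJ).ne_empty (subset_empty.1 (hA.subset hJ))

theorem sum_partitions_eq_add {M : Type*} [AddCommMonoid M] {s : Finset α}
    (hs : s.Nonempty) (g : Finset (Finset α) → M) :
    ∑ A ∈ partitions s, g A = g {s} + ∑ A ∈ partitions s with 2 ≤ A.card, g A := by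
  rw [← sum_filter_not_add_sum_filter (partitions s) (2 ≤ ·.card)]
  congr 1
  have hsingle : (partitions s).filter (fun A => ¬2 ≤ A.card) = {{s}} := by
    ext A
    simp only [mem_filter, mem_partitions, mem_singleton, not_le]
    refine ⟨fun ⟨hA, hcard⟩ => hA.eq_singleton ?_, ?_⟩
    · have : A ≠ ∅ := fun h => hs.ne_empty (isPartition_empty_iff.1 (h ▸ hA))
      have := card_pos.2 (nonempty_iff_ne_empty.2 this)
      omega
    · rintro rfl
      exact ⟨isPartition_singleton hs, by simp⟩
  rw [hsingle, sum_singleton]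

end Partitions

section ExponentialFormula

variable {α : Type*} [DecidableEq α]

theorem card_mul_sum_partitions_card_succ {R : Type*} [CommSemiring R] (g : Finset α → R)
    (s : Finset α) (k : ℕ) :
    ((k + 1 : ℕ) : R) * ∑ A ∈ partitions s with A.card = k + 1, ∏ J ∈ A, g J =
      ∑ B ∈ s.powerset with B.Nonempty,
        g B * ∑ A ∈ partitions (s \ B) with A.card = k, ∏ J ∈ A, g J := by
  have hcount : ∀ A ∈ (partitions s).filter (·.card = k + 1),
      ((k + 1 : ℕ) : R) * ∏ J ∈ A, g J = ∑ B ∈ A, g B * ∏ J ∈ A.erase B, g J := by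
    intro A hA
    rw [sum_congr rfl fun B hB => mul_prod_erase A g hB, sum_const, (mem_filter.1 hA).2,
      nsmul_eq_mul]
  simp_rw [mul_sum]
  rw [sum_congr rfl hcount, sum_sigma', sum_sigma']
  refine sum_nbij' (fun p => ⟨p.2, p.1.erase p.2⟩) (fun q => ⟨insert q.1 q.2, q.1⟩)
    ?_ ?_ ?_ ?_ ?_
  · rintro ⟨A, B⟩ h
    simp only [mem_sigma, mem_filter, mem_partitions, mem_powerset] at h ⊢
    obtain ⟨⟨hA, hcard⟩, hB⟩ := h
    exact ⟨⟨hA.subset hB, hA.nonempty B hB⟩, hA.erase hB,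
      by rw [card_erase_of_mem hB, hcard]; rfl⟩
  · rintro ⟨B, A⟩ h
    simp only [mem_sigma, mem_filter, mem_partitions, mem_powerset] at h ⊢
    obtain ⟨⟨hBs, hB⟩, hA, hcard⟩ := h
    exact ⟨⟨hA.insert hBs hB, by rw [card_insert_of_notMem (hA.notMem_of_sdiff hB), hcard]⟩,
      mem_insert_self B A⟩
  · rintro ⟨A, B⟩ h
    simp only [mem_sigma, mem_filter] at h
    simp [insert_erase h.2]
  · rintro ⟨B, A⟩ h
    simp only [mem_sigma, mem_filter, mem_partitions] at h
    simp [erase_insert (h.2.1.notMem_of_sdiff h.1.2)]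
  · intro p _
    rfl

variable {K : Type*} [Field K] [CharZero K]

open PowerSeries in
theorem factorial_mul_coeff_pow_eq_sum_partitions (f : ℕ → K) (hf : f 0 = 0) (k : ℕ)
    (s : Finset α) :
    ((s.card)! : K) * coeff s.card ((mk fun i => f i / (i ! : K)) ^ k) =
      k ! * ∑ A ∈ partitions s with A.card = k, ∏ J ∈ A, f J.card := by
  set E : PowerSeries K := mk fun i => f i / (i ! : K)
  induction k generalizing s with
  | zero =>
    simp only [card_eq_zero, filter_eq', mem_partitions, isPartition_empty_iff]
    by_cases hs : s = ∅ <;> simp [hs]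
  | succ k ih =>
    set n := s.card
    have hterm : ∀ B ∈ s.powerset, f B.card *
        (k ! * ∑ A ∈ partitions (s \ B) with A.card = k, ∏ J ∈ A, f J.card) =
          f B.card * (((n - B.card)! : K) * coeff (n - B.card) (E ^ k)) := fun B hB => by
      rw [← ih, card_sdiff_of_subset (mem_powerset.1 hB)]
    have hchoose : ∀ j ∈ range (n + 1),
        n.choose j • (f j * ((n - j)! * coeff (n - j) (E ^ k))) =
          (n ! : K) * (f j / j ! * coeff (n - j) (E ^ k)) := fun j hj => by
      rw [nsmul_eq_mul, ← Nat.choose_mul_factorial_mul_factorial (mem_range_succ_iff.1 hj)]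
      have : (j ! : K) ≠ 0 := Nat.cast_ne_zero.2 j.factorial_ne_zero
      push_cast
      field_simp
    symm
    calc ((k + 1)! : K) * ∑ A ∈ partitions s with A.card = k + 1, ∏ J ∈ A, f J.card
        = k ! * (((k + 1 : ℕ) : K) *
            ∑ A ∈ partitions s with A.card = k + 1, ∏ J ∈ A, f J.card) := by
          push_cast [Nat.factorial_succ]; ring
      _ = ∑ B ∈ s.powerset, f B.card *
            (k ! * ∑ A ∈ partitions (s \ B) with A.card = k, ∏ J ∈ A, f J.card) := by
          rw [card_mul_sum_partitions_card_succ, mul_sum, sum_filter_of_ne]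
          · simp_rw [mul_left_comm]
          · intro B _ hB
            contrapose! hB
            simp [hB, hf]
      _ = (n ! : K) * coeff n (E ^ (k + 1)) := by
          rw [sum_congr rfl hterm,
            sum_powerset_apply_card fun j => f j * (((n - j)! : K) * coeff (n - j) (E ^ k)),
            sum_congr rfl hchoose, ← mul_sum, _root_.pow_succ', coeff_mul,
            Nat.sum_antidiagonal_eq_sum_range_succ_mk]
          simp [E]

end ExponentialFormula

section Nests

variable {α : Type*}

structure IsRootedNest (B : Finset α) (S : Finset (Finset α)) : Prop where
  singleton_mem : ∀ i ∈ B, {i} ∈ S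
  nonempty : ∀ I ∈ S, I.Nonempty
  subset : ∀ I ∈ S, I ⊆ B
  root_mem : B ∈ S
  laminar : ∀ I ∈ S, ∀ J ∈ S, Disjoint I J ∨ I ⊆ J ∨ J ⊆ I

open Classical in
noncomputable def rootedNests (B : Finset α) : Finset (Finset (Finset α)) :=
  B.powerset.powerset.filter (IsRootedNest B)

theorem mem_rootedNests {B : Finset α} {S : Finset (Finset α)} :
    S ∈ rootedNests B ↔ IsRootedNest B S := by
  classical
  rw [rootedNests, mem_filter, mem_powerset, and_iff_right_iff_imp]
  exact fun hS I hI => mem_powerset.2 (hS.subset I hI)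

variable [DecidableEq α]

def children (S : Finset (Finset α)) (I : Finset α) : Finset (Finset α) :=
  S.filter fun J => J ⊂ I ∧ ∀ K ∈ S, K ⊂ I → J ⊆ K → J = K

def nestWeight {R : Type*} [CommMonoid R] (w : ℕ → R) (S : Finset (Finset α)) : R :=
  ∏ I ∈ S with 2 ≤ I.card, w (children S I).card

noncomputable def rootedNestSum {R : Type*} [CommSemiring R] (w : ℕ → R) (B : Finset α) : R :=
  ∑ S ∈ rootedNests B, nestWeight w S

def graft (B : Finset α) (A : Finset (Finset α)) (T : ∀ J ∈ A, Finset (Finset α)) :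
    Finset (Finset α) :=
  insert B (A.attach.biUnion fun J => T J.1 J.2)

variable {B I J : Finset α} {S : Finset (Finset α)}

theorem mem_children :
    J ∈ children S I ↔ J ∈ S ∧ J ⊂ I ∧ ∀ K ∈ S, K ⊂ I → J ⊆ K → J = K :=
  mem_filter

theorem children_filter_subset (hIJ : I ⊆ J) :
    children (S.filter (· ⊆ J)) I = children S I := by
  ext K
  simp only [mem_children, mem_filter]
  constructor
  · rintro ⟨⟨hK, -⟩, hKI, hmax⟩
    exact ⟨hK, hKI, fun L hL hLI => hmax L ⟨hL, hLI.subset.trans hIJ⟩ hLI⟩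
  · rintro ⟨hK, hKI, hmax⟩
    exact ⟨⟨hK, hKI.subset.trans hIJ⟩, hKI, fun L hL => hmax L hL.1⟩

theorem mem_graft {A : Finset (Finset α)} {T : ∀ J ∈ A, Finset (Finset α)} :
    I ∈ graft B A T ↔ I = B ∨ ∃ J, ∃ hJ : J ∈ A, I ∈ T J hJ := by
  simp [graft]

namespace IsRootedNest

theorem exists_mem_children (hS : IsRootedNest B S) (hI : I ∈ S) (hIB : I ≠ B) :
    ∃ J ∈ children S B, I ⊆ J := by
  obtain ⟨J, hJ, hmax⟩ :=
    exists_max_image (S.filter fun K => I ⊆ K ∧ K ≠ B) card ⟨I, by simp [hI, hIB]⟩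
  simp only [mem_filter] at hJ
  refine ⟨J, mem_children.2 ⟨hJ.1, (hS.subset J hJ.1).ssubset_of_ne hJ.2.2,
    fun K hK hKB hJK => ?_⟩, hJ.2.1⟩
  exact eq_of_subset_of_card_le hJK (hmax K (by simp [hK, hJ.2.1.trans hJK, hKB.ne]))

theorem isPartition_children (hS : IsRootedNest B S) (hB : 2 ≤ B.card) :
    IsPartition B (children S B) where
  nonempty J hJ := hS.nonempty J (mem_children.1 hJ).1
  pairwiseDisjoint J hJ K hK hJK := by
    obtain ⟨hJS, hJB, hJmax⟩ := mem_children.1 hJ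
    obtain ⟨hKS, hKB, hKmax⟩ := mem_children.1 hK
    rcases hS.laminar J hJS K hKS with h | h | h
    · exact h
    · exact absurd (hJmax K hKS hKB h) hJK
    · exact absurd (hKmax J hJS hJB h).symm hJK
  biUnion_eq := by
    refine (biUnion_subset.2 fun J hJ => (mem_children.1 hJ).2.1.subset).antisymm
      fun i hi => ?_
    have hiB : {i} ≠ B := by
      rintro rfl
      simp at hB
    obtain ⟨J, hJ, hiJ⟩ := hS.exists_mem_children (hS.singleton_mem i hi) hiB
    exact mem_biUnion.2 ⟨J, hJ, singleton_subset_iff.1 hiJ⟩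

theorem two_le_card_children (hS : IsRootedNest B S) (hB : 2 ≤ B.card) :
    2 ≤ (children S B).card :=
  (hS.isPartition_children hB).two_le_card (card_pos.1 (by omega))
    fun h => (mem_children.1 h).2.1.ne rfl

theorem restrict (hS : IsRootedNest B S) (hJ : J ∈ S) : IsRootedNest J (S.filter (· ⊆ J)) where
  singleton_mem i hi :=
    mem_filter.2 ⟨hS.singleton_mem i (hS.subset J hJ hi), singleton_subset_iff.2 hi⟩
  nonempty I hI := hS.nonempty I (mem_filter.1 hI).1
  subset _ hI := (mem_filter.1 hI).2
  root_mem := mem_filter.2 ⟨hJ, subset_refl J⟩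
  laminar I hI K hK := hS.laminar I (mem_filter.1 hI).1 K (mem_filter.1 hK).1

theorem eq_insert_biUnion_children (hS : IsRootedNest B S) :
    S = insert B ((children S B).biUnion fun J => S.filter (· ⊆ J)) := by
  ext I
  simp only [mem_insert, mem_biUnion, mem_filter]
  constructor
  · intro hI
    by_cases hIB : I = B
    · exact Or.inl hIB
    · obtain ⟨J, hJ, hIJ⟩ := hS.exists_mem_children hI hIB
      exact Or.inr ⟨J, hJ, hI, hIJ⟩
  · rintro (rfl | ⟨J, -, hI, -⟩)
    exacts [hS.root_mem, hI]

theorem nestWeight_eq (hS : IsRootedNest B S) {R : Type*} [CommMonoid R] (w : ℕ → R)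
    (hB : 2 ≤ B.card) :
    nestWeight w S =
      w (children S B).card * ∏ J ∈ children S B, nestWeight w (S.filter (· ⊆ J)) := by
  have hA := hS.isPartition_children hB
  have hnodes : S.filter (fun I => 2 ≤ I.card) = insert B ((children S B).biUnion
      fun J => (S.filter (· ⊆ J)).filter fun I => 2 ≤ I.card) := by
    conv_lhs => rw [hS.eq_insert_biUnion_children]
    rw [filter_insert, if_pos hB, filter_biUnion]
  have hBnot :
      B ∉ (children S B).biUnion fun J => (S.filter (· ⊆ J)).filter fun I => 2 ≤ I.card := by
    rw [mem_biUnion]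
    rintro ⟨J, hJ, hBJ⟩
    exact (hA.ssubset_of_two_le_card (hS.two_le_card_children hB) hJ).not_subset
      (mem_filter.1 (mem_filter.1 hBJ).1).2
  have hdisj : ((children S B : Set (Finset α))).PairwiseDisjoint
      fun J => (S.filter (· ⊆ J)).filter fun I => 2 ≤ I.card := by
    intro J hJ K hK hJK
    refine disjoint_left.2 fun I hIJ hIK => hJK ?_
    simp only [mem_filter] at hIJ hIK
    exact hA.eq_of_subset hJ hK (hS.nonempty I hIJ.1.1) hIJ.1.2 hIK.1.2
  unfold nestWeight
  rw [hnodes, prod_insert hBnot, prod_biUnion hdisj]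
  refine congrArg _ (prod_congr rfl fun J _ => prod_congr rfl fun I hI => ?_)
  rw [children_filter_subset (mem_filter.1 (mem_filter.1 hI).1).2]

end IsRootedNest

end Nests

section Graft

variable {α : Type*} [DecidableEq α] {B : Finset α} {A : Finset (Finset α)}
  {T : ∀ J ∈ A, Finset (Finset α)}

theorem isRootedNest_graft (hA : IsPartition B A) (hB : B.Nonempty)
    (hT : ∀ J (hJ : J ∈ A), IsRootedNest J (T J hJ)) : IsRootedNest B (graft B A T) where
  singleton_mem i hi := by
    obtain ⟨J, hJ, hiJ⟩ := mem_biUnion.1 (hA.biUnion_eq ▸ hi)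
    exact mem_graft.2 (Or.inr ⟨J, hJ, (hT J hJ).singleton_mem i hiJ⟩)
  nonempty I hI := by
    obtain rfl | ⟨J, hJ, hI⟩ := mem_graft.1 hI
    exacts [hB, (hT J hJ).nonempty I hI]
  subset I hI := by
    obtain rfl | ⟨J, hJ, hI⟩ := mem_graft.1 hI
    exacts [subset_rfl, ((hT J hJ).subset I hI).trans (hA.subset hJ)]
  root_mem := mem_insert_self B _
  laminar I hI K hK := by
    rcases mem_graft.1 hI, mem_graft.1 hK with
      ⟨rfl | ⟨J, hJ, hIJ⟩, rfl | ⟨J', hJ', hKJ'⟩⟩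
    · exact Or.inr (Or.inl subset_rfl)
    · exact Or.inr (Or.inr (((hT J' hJ').subset K hKJ').trans (hA.subset hJ')))
    · exact Or.inr (Or.inl (((hT J hJ).subset I hIJ).trans (hA.subset hJ)))
    · by_cases hJJ' : J = J'
      · subst hJJ'
        exact (hT J hJ).laminar I hIJ K hKJ'
      · exact Or.inl ((hA.disjoint hJ hJ' hJJ').mono ((hT J hJ).subset I hIJ)
          ((hT J' hJ').subset K hKJ'))

theorem children_graft (hA : IsPartition B A) (h2 : 2 ≤ A.card)
    (hT : ∀ J (hJ : J ∈ A), IsRootedNest J (T J hJ)) : children (graft B A T) B = A := by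
  have hmem : ∀ J (hJ : J ∈ A), J ∈ graft B A T :=
    fun J hJ => mem_graft.2 (Or.inr ⟨J, hJ, (hT J hJ).root_mem⟩)
  ext K
  rw [mem_children]
  constructor
  · rintro ⟨hK, hKB, hmax⟩
    obtain rfl | ⟨J, hJ, hKJ⟩ := mem_graft.1 hK
    · exact absurd hKB (ssubset_irrefl K)
    · rwa [hmax J (hmem J hJ) (hA.ssubset_of_two_le_card h2 hJ) ((hT J hJ).subset K hKJ)]
  · refine fun hK => ⟨hmem K hK, hA.ssubset_of_two_le_card h2 hK, fun L hL hLB hKL => ?_⟩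
    obtain rfl | ⟨J, hJ, hLJ⟩ := mem_graft.1 hL
    · exact absurd hLB (ssubset_irrefl L)
    · have hLJ' := (hT J hJ).subset L hLJ
      obtain rfl := hA.eq_of_subset hK hJ (hA.nonempty K hK) subset_rfl (hKL.trans hLJ')
      exact hKL.antisymm hLJ'

theorem filter_graft (hA : IsPartition B A) (h2 : 2 ≤ A.card)
    (hT : ∀ J (hJ : J ∈ A), IsRootedNest J (T J hJ)) {J : Finset α} (hJ : J ∈ A) :
    (graft B A T).filter (· ⊆ J) = T J hJ := by
  ext I
  rw [mem_filter, mem_graft]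
  constructor
  · rintro ⟨rfl | ⟨J', hJ', hI⟩, hIJ⟩
    · exact absurd hIJ (hA.ssubset_of_two_le_card h2 hJ).not_subset
    · obtain rfl := hA.eq_of_subset hJ' hJ ((hT J' hJ').nonempty I hI)
        ((hT J' hJ').subset I hI) hIJ
      exact hI
  · exact fun hI => ⟨Or.inr ⟨J, hJ, hI⟩, (hT J hJ).subset I hI⟩

theorem IsRootedNest.graft_children {S : Finset (Finset α)} (hS : IsRootedNest B S) :
    graft B (children S B) (fun J _ => S.filter (· ⊆ J)) = S := by
  rw [graft, attach_biUnion (f := fun J => S.filter (· ⊆ J)), ← hS.eq_insert_biUnion_children]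

theorem rootedNestSum_eq_sum_partitions {R : Type*} [CommSemiring R] (w : ℕ → R)
    (hB : 2 ≤ B.card) :
    rootedNestSum w B =
      ∑ A ∈ partitions B with 2 ≤ A.card, w A.card * ∏ J ∈ A, rootedNestSum w J := by
  simp_rw [rootedNestSum, prod_sum, mul_sum]
  rw [sum_sigma']
  refine sum_nbij' (fun S => ⟨children S B, fun J _ => S.filter (· ⊆ J)⟩)
    (fun p => graft B p.1 p.2) ?_ ?_ ?_ ?_ ?_
  · intro S hS
    rw [mem_rootedNests] at hS
    simp only [mem_sigma, mem_filter, mem_partitions, mem_pi, mem_rootedNests]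
    exact ⟨⟨hS.isPartition_children hB, hS.two_le_card_children hB⟩,
      fun J hJ => hS.restrict (mem_children.1 hJ).1⟩
  · rintro ⟨A, T⟩ h
    simp only [mem_sigma, mem_filter, mem_partitions, mem_pi, mem_rootedNests] at h ⊢
    exact isRootedNest_graft h.1.1 (card_pos.1 (by omega)) h.2
  · intro S hS
    exact (mem_rootedNests.1 hS).graft_children
  · rintro ⟨A, T⟩ h
    simp only [mem_sigma, mem_filter, mem_partitions, mem_pi, mem_rootedNests] at h
    have hc := children_graft h.1.1 h.1.2 h.2
    refine Sigma.ext hc ?_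
    rw [hc]
    exact heq_of_eq (funext fun J => funext fun hJ => filter_graft h.1.1 h.1.2 h.2 hJ)
  · intro S hS
    rw [(mem_rootedNests.1 hS).nestWeight_eq w hB, prod_attach (children S B)
      (fun J => nestWeight w (S.filter (· ⊆ J)))]

end Graft

section Transport

variable {α β : Type*} (f : α ↪ β)

theorem Finset.powerset_map (s : Finset α) :
    (s.map f).powerset = s.powerset.map (mapEmbedding f).toEmbedding := by
  ext t
  simp [subset_map_iff, eq_comm]

theorem isRootedNest_map_iff {B : Finset α} {S : Finset (Finset α)} :
    IsRootedNest (B.map f) (S.map (mapEmbedding f).toEmbedding) ↔ IsRootedNest B S := by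
  constructor
  · rintro ⟨h1, h2, h3, h4, h5⟩
    refine ⟨fun i hi => ?_, fun I hI => ?_, fun I hI => ?_, ?_, fun I hI J hJ => ?_⟩
    · simpa [← map_singleton] using h1 (f i) (mem_map_of_mem f hi)
    · simpa using h2 _ (mem_map_of_mem _ hI)
    · simpa using h3 _ (mem_map_of_mem _ hI)
    · simpa using h4
    · simpa using h5 _ (mem_map_of_mem _ hI) _ (mem_map_of_mem _ hJ)
  · intro hS
    refine ⟨fun b hb => ?_, fun K hK => ?_, fun K hK => ?_, mem_map_of_mem _ hS.root_mem,
      fun K hK L hL => ?_⟩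
    · obtain ⟨i, hi, rfl⟩ := mem_map.1 hb
      simpa [← map_singleton] using hS.singleton_mem i hi
    · obtain ⟨I, hI, rfl⟩ := mem_map.1 hK
      simpa using hS.nonempty I hI
    · obtain ⟨I, hI, rfl⟩ := mem_map.1 hK
      simpa using hS.subset I hI
    · obtain ⟨I, hI, rfl⟩ := mem_map.1 hK
      obtain ⟨J, hJ, rfl⟩ := mem_map.1 hL
      simpa using hS.laminar I hI J hJ

variable [DecidableEq α] [DecidableEq β]

theorem children_map (S : Finset (Finset α)) (I : Finset α) :
    children (S.map (mapEmbedding f).toEmbedding) (I.map f) =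
      (children S I).map (mapEmbedding f).toEmbedding := by
  rw [children, filter_map, children]
  congr 1
  exact filter_congr fun J _ => by simp

theorem nestWeight_map {R : Type*} [CommMonoid R] (w : ℕ → R) (S : Finset (Finset α)) :
    nestWeight w (S.map (mapEmbedding f).toEmbedding) = nestWeight w S := by
  simp [nestWeight, filter_map, prod_map, children_map]

theorem rootedNestSum_map {R : Type*} [CommSemiring R] (w : ℕ → R) (B : Finset α) :
    rootedNestSum w (B.map f) = rootedNestSum w B := by
  classical
  rw [rootedNestSum, rootedNests, powerset_map, powerset_map, filter_map, sum_map]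
  exact sum_congr (filter_congr fun S _ => isRootedNest_map_iff f) fun S _ => nestWeight_map f w S

end Transport

theorem rootedNestSum_eq_univ_fin {α R : Type*} [DecidableEq α] [CommSemiring R] (w : ℕ → R)
    (B : Finset α) : rootedNestSum w B = rootedNestSum w (univ : Finset (Fin B.card)) := by
  let e : Fin B.card ↪ α := B.equivFin.symm.toEmbedding.trans (Function.Embedding.subtype _)
  have he : univ.map e = B := by
    rw [← map_map, map_univ_equiv, univ_eq_attach, attach_map_val]
  rw [← rootedNestSum_map e, he]

section NestPolynomials

theorem rootedNests_singleton {α : Type*} (a : α) : rootedNests {a} = {{{a}}} := by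
  ext S
  rw [mem_rootedNests, mem_singleton]
  constructor
  · intro hS
    ext I
    rw [mem_singleton]
    exact ⟨fun hI => (hS.nonempty I hI).subset_singleton_iff.1 (hS.subset I hI),
      fun h => h ▸ hS.root_mem⟩
  · rintro rfl
    exact ⟨by simp, by simp, by simp, by simp, by simp⟩

variable {n : ℕ}

theorem exists_mem_maxElems {S : Finset (Finset (Fin n))} {I : Finset (Fin n)} (hI : I ∈ S) :
    ∃ M ∈ maxElems n S, I ⊆ M := by
  obtain ⟨M, hM, hmax⟩ :=
    exists_max_image (S.filter (I ⊆ ·)) card ⟨I, mem_filter.2 ⟨hI, subset_rfl⟩⟩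
  rw [mem_filter] at hM
  refine ⟨M, mem_filter.2 ⟨hM.1, fun J hJ hMJ => ?_⟩, hM.2⟩
  exact eq_of_subset_of_card_le hMJ (hmax J (mem_filter.2 ⟨hJ, hM.2.trans hMJ⟩))

theorem isNest_and_numMax_eq_one_iff {S : Finset (Finset (Fin n))} :
    IsNest n S ∧ numMax n S = 1 ↔ IsRootedNest univ S := by
  constructor
  · rintro ⟨⟨h1, h2, h3⟩, hc⟩
    obtain ⟨M, hM⟩ := card_eq_one.1 hc
    have hMS : M ∈ S := (mem_filter.1 (hM ▸ mem_singleton_self M)).1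
    have hM_univ : M = univ := eq_univ_of_forall fun i => by
      obtain ⟨M', hM', hiM'⟩ := exists_mem_maxElems (h1 i)
      rw [hM, mem_singleton] at hM'
      exact hM' ▸ hiM' (mem_singleton_self i)
    exact ⟨fun i _ => h1 i, h2, fun I _ => subset_univ I, hM_univ ▸ hMS,
      fun I hI J hJ => (h3 I hI J hJ).imp_left disjoint_iff_inter_eq_empty.2⟩
  · intro hS
    refine ⟨⟨fun i => hS.singleton_mem i (mem_univ i), hS.nonempty,
      fun I hI J hJ => (hS.laminar I hI J hJ).imp_left disjoint_iff_inter_eq_empty.1⟩,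
      card_eq_one.2 ⟨univ, ?_⟩⟩
    ext I
    simp only [maxElems, mem_filter, mem_singleton]
    exact ⟨fun h => h.2 univ hS.root_mem (subset_univ I),
      by rintro rfl; exact ⟨hS.root_mem, fun J _ h => (univ_subset_iff.1 h).symm⟩⟩

theorem sons_eq_children (S : Finset (Finset (Fin n))) (I : Finset (Fin n)) :
    sons n S I = children S I := by
  ext J
  simp [sons, children]

theorem hpoly_eq_rootedNestSum (d n : ℕ) :
    hpoly d n = rootedNestSum (fun k => sigmaPoly d (k - 1)) (univ : Finset (Fin n)) := by
  classical
  rw [hpoly, rootedNestSum, rootedNests, powerset_univ, powerset_univ]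
  refine sum_congr (filter_congr fun S _ => isNest_and_numMax_eq_one_iff) fun S _ => ?_
  -- the sum over `μ ∈ M_S` factorises into `∏_{I ∈ S°} σ_d(c_I - 1)`
  simp only [nestWeight, sigmaPoly, prod_sum, prod_pow_eq_pow_sum, sons_eq_children]
  rfl

theorem hpoly_zero (d : ℕ) : hpoly d 0 = 0 := by
  rw [hpoly_eq_rootedNestSum, rootedNestSum]
  refine sum_eq_zero fun S hS => ?_
  have hS := mem_rootedNests.1 hS
  exact absurd (hS.nonempty _ hS.root_mem) (by simp)

theorem hpoly_one (d : ℕ) : hpoly d 1 = 1 := by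
  rw [hpoly_eq_rootedNestSum, univ_unique, rootedNestSum, rootedNests_singleton, sum_singleton]
  simp [nestWeight, filter_singleton]

theorem hpoly_eq_sum_partitions (d : ℕ) (hn : 2 ≤ n) :
    hpoly d n = ∑ A ∈ partitions (univ : Finset (Fin n)) with 2 ≤ A.card,
      sigmaPoly d (A.card - 1) * ∏ J ∈ A, hpoly d J.card := by
  simp only [hpoly_eq_rootedNestSum]
  rw [rootedNestSum_eq_sum_partitions _ (by simpa using hn)]
  simp only [← rootedNestSum_eq_univ_fin]

end NestPolynomials

section FunctionalEquation

open PowerSeries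

theorem sigmaPoly_mul_X_sub_one {d m : ℕ} (hdm : 0 < d * m) :
    sigmaPoly d m * (Polynomial.X - 1) = Polynomial.X ^ (d * m) - Polynomial.X := by
  rw [sigmaPoly, Icc_sub_one_right_eq_Ico_of_not_isMin (by simpa using hdm.ne'),
    geom_sum_Ico_mul _ hdm, pow_one]

noncomputable def toRatFunc : Polynomial ℤ →+* RatFunc ℚ :=
  (algebraMap (Polynomial ℚ) (RatFunc ℚ)).comp (Polynomial.mapRingHom (Int.castRingHom ℚ))

theorem toRatFunc_X : toRatFunc Polynomial.X = RatFunc.X := by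
  simp [toRatFunc]

theorem X_pow_mul_X_sub_one_mul_sigmaPoly {d k : ℕ} (hd : 1 ≤ d) (hk : 2 ≤ k) :
    RatFunc.X ^ d * (RatFunc.X - 1) * toRatFunc (sigmaPoly d (k - 1)) =
      (RatFunc.X : RatFunc ℚ) ^ (d * k) - RatFunc.X ^ (d + 1) := by
  have h := congrArg toRatFunc (sigmaPoly_mul_X_sub_one (d := d) (m := k - 1)
    (Nat.mul_pos hd (by omega)))
  rw [map_mul, map_sub, map_sub, map_one, map_pow, toRatFunc_X] at h
  have hdk : d * k = d + d * (k - 1) :=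
    calc d * k = d * (k - 1 + 1) := by rw [Nat.sub_add_cancel (by omega)]
      _ = d + d * (k - 1) := by ring
  rw [mul_assoc, mul_comm (RatFunc.X - 1), h, mul_sub, ← pow_add, ← hdk, pow_succ]

theorem coeff_pexp {K : Type*} [Field K] [Algebra ℚ K] (f : PowerSeries K) (n : ℕ) :
    coeff n (pexp f) = ∑ k ∈ Finset.range (n + 1), coeff n (f ^ k) / k ! := by
  simp [pexp, Algebra.smul_def, div_eq_inv_mul]

theorem Npow_eq_mk (d : ℕ) : Npow d = mk fun i => toRatFunc (hpoly d i) / i ! := by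
  ext i
  rw [Npow, coeff_mk, coeff_mk]
  split_ifs with hi
  · simp [hi, hpoly_zero]
  · rfl

theorem factorial_mul_coeff_pow_Npow (d k n : ℕ) :
    (n ! : RatFunc ℚ) * coeff n (Npow d ^ k) =
      k ! * ∑ A ∈ partitions (univ : Finset (Fin n)) with A.card = k,
        ∏ J ∈ A, toRatFunc (hpoly d J.card) := by
  simpa [Npow_eq_mk] using factorial_mul_coeff_pow_eq_sum_partitions
    (fun i => toRatFunc (hpoly d i)) (by simp [hpoly_zero]) k (univ : Finset (Fin n))

theorem factorial_mul_coeff_pexp_sub_eq_sum_partitions (d n : ℕ) :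
    (n ! : RatFunc ℚ) * coeff n (pexp (C (RatFunc.X ^ d) * Npow d)
        - C (RatFunc.X ^ (d + 1)) * pexp (Npow d)) =
      ∑ A ∈ partitions (univ : Finset (Fin n)),
        (RatFunc.X ^ (d * A.card) - RatFunc.X ^ (d + 1)) *
          ∏ J ∈ A, toRatFunc (hpoly d J.card) := by
  have hcard : ∀ A ∈ partitions (univ : Finset (Fin n)), A.card ∈ Finset.range (n + 1) :=
    fun A hA => mem_range_succ_iff.2 ((mem_partitions.1 hA).card_le.trans_eq (card_fin n))
  rw [← sum_fiberwise_of_maps_to hcard, map_sub, coeff_C_mul, coeff_pexp, coeff_pexp, mul_sum,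
    mul_sub, mul_sum, mul_sum, ← sum_sub_distrib]
  refine sum_congr rfl fun k _ => ?_
  have hk : (k ! : RatFunc ℚ) ≠ 0 := Nat.cast_ne_zero.2 k.factorial_ne_zero
  rw [mul_pow, ← map_pow, coeff_C_mul, ← pow_mul]
  calc (n ! : RatFunc ℚ) * (RatFunc.X ^ (d * k) * coeff n (Npow d ^ k) / (k ! : RatFunc ℚ)) -
        (n ! : RatFunc ℚ) * (RatFunc.X ^ (d + 1) * (coeff n (Npow d ^ k) / (k ! : RatFunc ℚ)))
      = (RatFunc.X ^ (d * k) - RatFunc.X ^ (d + 1)) *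
          ((n ! : RatFunc ℚ) * coeff n (Npow d ^ k)) / (k ! : RatFunc ℚ) := by
        ring
    _ = _ := by
        rw [factorial_mul_coeff_pow_Npow, mul_left_comm, mul_div_cancel_left₀ _ hk, mul_sum]
        exact sum_congr rfl fun A hA => by rw [(mem_filter.1 hA).2]

theorem sum_partitions_two_le_card_eq {d n : ℕ} (hd : 1 ≤ d) (hn : 2 ≤ n) :
    ∑ A ∈ partitions (univ : Finset (Fin n)) with 2 ≤ A.card,
        (RatFunc.X ^ (d * A.card) - RatFunc.X ^ (d + 1)) * ∏ J ∈ A, toRatFunc (hpoly d J.card) =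
      RatFunc.X ^ d * (RatFunc.X - 1) * toRatFunc (hpoly d n) := by
  rw [hpoly_eq_sum_partitions d hn, map_sum, mul_sum]
  refine sum_congr rfl fun A hA => ?_
  rw [map_mul, map_prod, ← mul_assoc, X_pow_mul_X_sub_one_mul_sigmaPoly hd (mem_filter.1 hA).2]

end FunctionalEquation

/-- The functional equation
`(1 - x)x^d t + (1 - x^{d+1}) = exp(x^d N) - x^{d+1} exp(N)`. -/
theorem stmt9 (d : ℕ) (hd : 1 ≤ d) :
    PowerSeries.C (R := RatFunc ℚ) ((1 - RatFunc.X) * RatFunc.X ^ d) * PowerSeries.X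
        + PowerSeries.C (R := RatFunc ℚ) (1 - RatFunc.X ^ (d + 1)) =
      pexp (PowerSeries.C (R := RatFunc ℚ) (RatFunc.X ^ d) * Npow d)
        - PowerSeries.C (R := RatFunc ℚ) (RatFunc.X ^ (d + 1)) * pexp (Npow d) := by
  ext n
  refine mul_left_cancel₀ (Nat.cast_ne_zero.2 n.factorial_ne_zero : (n ! : RatFunc ℚ) ≠ 0) ?_
  rw [factorial_mul_coeff_pexp_sub_eq_sum_partitions, map_add, PowerSeries.coeff_C_mul,
    PowerSeries.coeff_X, PowerSeries.coeff_C]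
  rcases n with _ | _ | n
  · simp [partitions_empty]
  · have hfilter : (partitions (univ : Finset (Fin 1))).filter (2 ≤ ·.card) = ∅ :=
      filter_eq_empty_iff.2 fun A hA h => by
        have := (mem_partitions.1 hA).card_le
        simp only [card_univ, Fintype.card_fin] at this
        omega
    rw [sum_partitions_eq_add univ_nonempty, hfilter, sum_empty, if_pos rfl, if_neg (by omega),
      card_singleton, prod_singleton, card_univ, Fintype.card_fin, hpoly_one, map_one,
      Nat.factorial_one, Nat.cast_one]
    ring
  · rw [sum_partitions_eq_add univ_nonempty, sum_partitions_two_le_card_eq hd (by omega),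
      if_neg (by omega), if_neg (by omega), card_singleton, prod_singleton, card_univ,
      Fintype.card_fin]
    ring
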